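/- arXiv:2404.14303 — 2 statements merged into one kernel-verified Lean document; each statement's English description precedes it below -/
import Mathlib

section
/- Let L be a linear functional on the space of two-variable real Laurent polynomials. A system of orthogonal Laurent polynomials with respect to L (a Laurent system {φ_n} with L(φ_n φ_k^T) = 0 for k < n and L(φ_n φ_n^T) invertible) exists if and only if det(M_n) ≠ 0 for all n ≥ 0, where M_n is the moment matrix. -/
/-- The sequence `c n = (-1)^(n+1) * ⌊(n+1)/2⌋`. -/
def cseq (n : ℕ) : ℤ := (-1) ^ (n + 1) * (((n + 1) / 2 : ℕ) : ℤ)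

/-- The ring of real Laurent polynomials in two variables. -/
noncomputable abbrev LaurentPoly2 : Type := AddMonoidAlgebra ℝ (ℤ × ℤ)

/-- The Laurent monomial `x^(c i) y^(c j)`. -/
noncomputable def lmon (i j : ℕ) : LaurentPoly2 :=
  AddMonoidAlgebra.single (cseq i, cseq j) (1 : ℝ)

/-- `𝓛_n`: the span of the monomials `x^(c i) y^(c j)` with `i + j ≤ n`. -/
noncomputable def LnSpan (n : ℕ) : Submodule ℝ LaurentPoly2 :=
  Submodule.span ℝ {f | ∃ i j : ℕ, i + j ≤ n ∧ f = lmon i j}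

/-- `𝓛_{n-1}`, with the convention `𝓛_{-1} = 0`. -/
noncomputable def LprevSpan : ℕ → Submodule ℝ LaurentPoly2
  | 0 => ⊥
  | n + 1 => LnSpan n

/-- A Laurent system: for each `n`, a vector of `n+1` Laurent polynomials lying in
`𝓛_n` whose components are linearly independent modulo `𝓛_{n-1}`
(i.e. the vector is in `𝓛_n \ 𝓛_{n-1}` with regular leading coefficient matrix). -/
def IsLaurentSystem (φ : (n : ℕ) → Fin (n + 1) → LaurentPoly2) : Prop :=
  ∀ n : ℕ, (∀ a, φ n a ∈ LnSpan n) ∧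
    LinearIndependent ℝ (fun a : Fin (n + 1) => (LprevSpan n).mkQ (φ n a))

/-- The index set of the moment matrix `M_n`: pairs `(i, j)` with `i + j ≤ n`. -/
abbrev momIdx (n : ℕ) : Type := {q : Fin (n + 1) × Fin (n + 1) // (q.1 : ℕ) + (q.2 : ℕ) ≤ n}

/-- The moment matrix `M_n` of the linear functional `L`. -/
noncomputable def momMat (L : LaurentPoly2 →ₗ[ℝ] ℝ) (n : ℕ) :
    Matrix (momIdx n) (momIdx n) ℝ :=
  Matrix.of fun q r => L (lmon (q.1.1 : ℕ) (q.1.2 : ℕ) * lmon (r.1.1 : ℕ) (r.1.2 : ℕ))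

/-! ### Auxiliary development -/

namespace OLaux

lemma cseq_even (k : ℕ) : cseq (2*k) = -(k:ℤ) := by
  unfold cseq
  rw [Odd.neg_one_pow ⟨k, by ring⟩]
  have : (2*k+1)/2 = k := by omega
  rw [this]; ring

lemma cseq_odd (k : ℕ) : cseq (2*k+1) = (k:ℤ)+1 := by
  unfold cseq
  rw [Even.neg_one_pow ⟨k+1, by ring⟩]
  have : (2*k+1+1)/2 = k+1 := by omega
  rw [this]; push_cast; ring

lemma cseq_inj : Function.Injective cseq := by
  intro m n h
  rcases Nat.even_or_odd m with ⟨k,hk⟩|⟨k,hk⟩ <;>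
    rcases Nat.even_or_odd n with ⟨l,hl⟩|⟨l,hl⟩ <;>
    rw [show m = _ from hk, show n = _ from hl] at h ⊢
  · rw [show k+k = 2*k by ring, show l+l=2*l by ring, cseq_even, cseq_even] at h; omega
  · rw [show k+k = 2*k by ring, cseq_even, cseq_odd] at h; omega
  · rw [show l+l = 2*l by ring, cseq_odd, cseq_even] at h; omega
  · rw [cseq_odd, cseq_odd] at h; omega

lemma lmon_li : LinearIndependent ℝ (fun p : ℕ × ℕ => lmon p.1 p.2) := by
  have h : (fun p : ℕ × ℕ => lmon p.1 p.2) =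
      (AddMonoidAlgebra.basis (ℤ × ℤ) ℝ) ∘
        (fun p : ℕ × ℕ => ((cseq p.1, cseq p.2) : ℤ × ℤ)) := by
    funext p
    simp [lmon, AddMonoidAlgebra.basis_apply]
  rw [h]
  exact ((AddMonoidAlgebra.basis (ℤ × ℤ) ℝ).linearIndependent).comp _
    (fun p q hpq => by
      obtain ⟨h1, h2⟩ := Prod.mk.injEq _ _ _ _ ▸ hpq
      exact Prod.ext (cseq_inj (congrArg Prod.fst hpq)) (cseq_inj (congrArg Prod.snd hpq)))

/-- the monomial family indexed by `momIdx n` -/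
noncomputable def momFam (n : ℕ) : momIdx n → LaurentPoly2 :=
  fun q => lmon (q.1.1 : ℕ) (q.1.2 : ℕ)

lemma momFam_li (n : ℕ) : LinearIndependent ℝ (momFam n) := by
  have : momFam n = (fun p : ℕ × ℕ => lmon p.1 p.2) ∘
      (fun q : momIdx n => (((q.1.1 : ℕ), (q.1.2 : ℕ)) : ℕ × ℕ)) := rfl
  rw [this]
  exact lmon_li.comp _ (fun q r h => by
    apply Subtype.ext
    have h1 : (q.1.1 : ℕ) = r.1.1 := congrArg Prod.fst h
    have h2 : (q.1.2 : ℕ) = r.1.2 := congrArg Prod.snd h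
    exact Prod.ext (Fin.ext h1) (Fin.ext h2))

lemma LnSpan_eq_span_range (n : ℕ) :
    LnSpan n = Submodule.span ℝ (Set.range (momFam n)) := by
  unfold LnSpan
  congr 1
  ext f
  constructor
  · rintro ⟨i, j, hij, rfl⟩
    exact ⟨⟨(⟨i, by omega⟩, ⟨j, by omega⟩), by simpa using hij⟩, rfl⟩
  · rintro ⟨q, rfl⟩
    exact ⟨q.1.1, q.1.2, q.2, rfl⟩

noncomputable def bLn (n : ℕ) : Module.Basis (momIdx n) ℝ (LnSpan n) :=
  (Module.Basis.span (momFam_li n)).map (LinearEquiv.ofEq _ _ (LnSpan_eq_span_range n).symm)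

lemma bLn_apply (n : ℕ) (q : momIdx n) : (bLn n q : LaurentPoly2) = momFam n q := by
  simp [bLn, Module.Basis.span_apply]

instance (n : ℕ) : FiniteDimensional ℝ (LnSpan n) :=
  Module.Finite.of_basis (bLn n)

/-- equivalence used to count `momIdx n` -/
def momEquiv (n : ℕ) : momIdx n ≃ (Σ k : Fin (n+1), Fin (k.1+1)) where
  toFun q := ⟨⟨(q.1.1 : ℕ) + (q.1.2 : ℕ), by omega⟩, ⟨q.1.1, by simp only [Fin.val_mk]; omega⟩⟩
  invFun s := ⟨(⟨(s.2 : ℕ), by rcases s with ⟨⟨k,hk⟩,⟨a,ha⟩⟩; simp only [Fin.val_mk] at *; omega⟩,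
      ⟨(s.1 : ℕ) - (s.2 : ℕ), by rcases s with ⟨⟨k,hk⟩,⟨a,ha⟩⟩; simp only [Fin.val_mk] at *; omega⟩), by
    rcases s with ⟨⟨k,hk⟩,⟨a,ha⟩⟩; simp only [Fin.val_mk] at *; omega⟩
  left_inv q := by
    apply Subtype.ext
    apply Prod.ext <;> apply Fin.ext <;> simp only [Fin.val_mk] <;> omega
  right_inv s := by
    rcases s with ⟨⟨k, hk⟩, ⟨a, ha⟩⟩
    have h1 : a + (k - a) = k := by simp only [Fin.val_mk] at ha; omega
    apply Sigma.ext
    · apply Fin.ext; simp only [Fin.val_mk]; omega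
    · apply (Fin.heq_ext_iff (by simp only [Fin.val_mk]; omega)).mpr
      simp

lemma card_momIdx (n : ℕ) :
    Fintype.card (momIdx n) = ∑ k : Fin (n+1), (k.1 + 1) := by
  rw [Fintype.card_congr (momEquiv n), Fintype.card_sigma]
  simp

lemma card_momIdx_zero : Fintype.card (momIdx 0) = 1 := by
  rw [card_momIdx]; simp

lemma card_momIdx_succ (n : ℕ) :
    Fintype.card (momIdx (n+1)) = Fintype.card (momIdx n) + (n+2) := by
  rw [card_momIdx, card_momIdx, Fin.sum_univ_castSucc]
  simp


/-! ### Bilinear form machinery -/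

variable (L : LaurentPoly2 →ₗ[ℝ] ℝ)

noncomputable def BF : LinearMap.BilinForm ℝ LaurentPoly2 :=
  LinearMap.mk₂ ℝ (fun p q => L (p * q))
    (fun p p' q => by simp [add_mul])
    (fun c p q => by simp [smul_mul_assoc])
    (fun p q q' => by simp [mul_add])
    (fun c p q => by simp [mul_smul_comm])

@[simp] lemma BF_apply (p q : LaurentPoly2) : BF L p q = L (p * q) := rfl

noncomputable def BrV (V : Submodule ℝ LaurentPoly2) : LinearMap.BilinForm ℝ V :=
  (BF L).compl₁₂ V.subtype V.subtype

@[simp] lemma BrV_apply (V : Submodule ℝ LaurentPoly2) (x y : V) :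
    BrV L V x y = L ((x : LaurentPoly2) * (y : LaurentPoly2)) := rfl

/-- Nondegeneracy of `L(p·q)` on `𝓛_n`, in concrete form. -/
def Nd (n : ℕ) : Prop := ∀ p ∈ LnSpan n, (∀ q ∈ LnSpan n, L (p * q) = 0) → p = 0

lemma nd_iff (n : ℕ) : (BrV L (LnSpan n)).Nondegenerate ↔ Nd L n := by
  constructor
  · intro h p hp hq
    have h0 : (⟨p, hp⟩ : LnSpan n) = 0 := h.1 ⟨p, hp⟩ (fun q => hq q q.2)
    simpa using congrArg Subtype.val h0
  · intro h; refine .ofSeparatingLeft fun x hx => ?_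
    exact Subtype.ext (h x x.2 (fun q hq => hx ⟨q, hq⟩))

lemma momMat_eq (n : ℕ) :
    momMat L n = LinearMap.BilinForm.toMatrix (bLn n) (BrV L (LnSpan n)) := by
  ext q r
  rw [LinearMap.BilinForm.toMatrix_apply, BrV_apply, bLn_apply, bLn_apply]
  rfl

lemma momMat_det_iff (n : ℕ) : (momMat L n).det ≠ 0 ↔ Nd L n := by
  rw [momMat_eq, ← LinearMap.BilinForm.nondegenerate_iff_det_ne_zero (bLn n), nd_iff]

/-! ### The orthogonal complement of `𝓛_{n-1}` in `𝓛_n` -/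

noncomputable def Wn (n : ℕ) : Submodule ℝ LaurentPoly2 :=
  LnSpan n ⊓ ⨅ q : (LprevSpan n), LinearMap.ker ((BF L).flip (q : LaurentPoly2))

lemma mem_Wn (n : ℕ) (p : LaurentPoly2) :
    p ∈ Wn L n ↔ p ∈ LnSpan n ∧ ∀ q ∈ LprevSpan n, L (p * q) = 0 := by
  simp only [Wn, Submodule.mem_inf, Submodule.mem_iInf, LinearMap.mem_ker]
  constructor
  · rintro ⟨h1, h2⟩; exact ⟨h1, fun q hq => h2 ⟨q, hq⟩⟩
  · rintro ⟨h1, h2⟩; exact ⟨h1, fun q => h2 q q.2⟩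

lemma Wn_le (n : ℕ) : Wn L n ≤ LnSpan n := inf_le_left

lemma LnSpan_mono : Monotone LnSpan := fun m n h =>
  Submodule.span_mono (fun f hf => by
    obtain ⟨i, j, hij, rfl⟩ := hf
    exact ⟨i, j, hij.trans h, rfl⟩)

lemma Lprev_le (n : ℕ) : LprevSpan n ≤ LnSpan n := by
  cases n with
  | zero => exact bot_le
  | succ n => exact LnSpan_mono (Nat.le_succ n)

instance (n : ℕ) : FiniteDimensional ℝ (LprevSpan n) := by
  cases n with
  | zero => exact inferInstanceAs (FiniteDimensional ℝ (⊥ : Submodule ℝ LaurentPoly2))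
  | succ n => exact inferInstanceAs (FiniteDimensional ℝ (LnSpan n))

instance (n : ℕ) : FiniteDimensional ℝ (Wn L n) :=
  Submodule.finiteDimensional_of_le (Wn_le L n)

lemma finrank_Ln (n : ℕ) : Module.finrank ℝ (LnSpan n) = Fintype.card (momIdx n) :=
  Module.finrank_eq_card_basis (bLn n)

lemma finrank_Ln_prev (n : ℕ) :
    Module.finrank ℝ (LnSpan n) = Module.finrank ℝ (LprevSpan n) + (n + 1) := by
  cases n with
  | zero =>
      rw [finrank_Ln, card_momIdx_zero,
        show LprevSpan 0 = (⊥ : Submodule ℝ LaurentPoly2) from rfl, finrank_bot ℝ LaurentPoly2]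
  | succ n =>
      rw [finrank_Ln, card_momIdx_succ, show LprevSpan (n+1) = LnSpan n from rfl, finrank_Ln]

/-- Decomposition `𝓛_n = 𝓛_{n-1} ⊔ W_n`, valid when the form is nondegenerate
on `𝓛_{n-1}`. -/
lemma sup_Wn (n : ℕ) (hprev : (BrV L (LprevSpan n)).Nondegenerate) :
    LprevSpan n ⊔ Wn L n = LnSpan n := by
  apply le_antisymm (sup_le (Lprev_le n) (Wn_le L n))
  intro p hp
  set f : Module.Dual ℝ (LprevSpan n) := (BF L p).comp (LprevSpan n).subtype with hf
  set r := ((BrV L (LprevSpan n)).toDual hprev).symm f with hrdef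
  have hr : ∀ q : LprevSpan n, L ((r : LaurentPoly2) * q) = L (p * q) := by
    intro q
    have := LinearMap.BilinForm.apply_toDual_symm_apply
      (B := BrV L (LprevSpan n)) (hB := hprev) f q
    exact this
  have hw : p - (r : LaurentPoly2) ∈ Wn L n := by
    rw [mem_Wn]
    refine ⟨Submodule.sub_mem _ hp (Lprev_le n r.2), fun q hq => ?_⟩
    rw [sub_mul, map_sub, hr ⟨q, hq⟩, sub_self]
  have hpeq : p = (r : LaurentPoly2) + (p - (r : LaurentPoly2)) := by ring
  rw [hpeq]
  exact Submodule.add_mem_sup r.2 hw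

lemma Lprev_nd_zero : (BrV L (LprevSpan 0)).Nondegenerate := by
  refine ⟨fun x _ => ?_, fun x _ => ?_⟩ <;>
  exact Subtype.ext ((Submodule.mem_bot ℝ).mp x.2)

lemma disj_Wn (n : ℕ) (hprev : (BrV L (LprevSpan n)).Nondegenerate) :
    LprevSpan n ⊓ Wn L n = ⊥ := by
  rw [eq_bot_iff]
  rintro p ⟨hp1, hp2⟩
  rw [Submodule.mem_bot]
  have hp2' := (mem_Wn L n p).mp hp2
  have h0 : (⟨p, hp1⟩ : LprevSpan n) = 0 :=
    hprev.1 ⟨p, hp1⟩ (fun q => hp2'.2 q q.2)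
  simpa using congrArg Subtype.val h0

lemma finrank_Wn (n : ℕ) (hprev : (BrV L (LprevSpan n)).Nondegenerate) :
    Module.finrank ℝ (Wn L n) = n + 1 := by
  have h := Submodule.finrank_sup_add_finrank_inf_eq (LprevSpan n) (Wn L n)
  rw [sup_Wn L n hprev, disj_Wn L n hprev, finrank_bot ℝ LaurentPoly2,
    finrank_Ln_prev] at h
  omega

/-- `𝓛_n` is spanned by `𝓛_{n-1}` together with any `n+1` elements of `𝓛_n`
independent mod `𝓛_{n-1}`. -/
lemma span_lemma (n : ℕ) (ψ : Fin (n+1) → LaurentPoly2) (hmem : ∀ a, ψ a ∈ LnSpan n)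
    (hli : LinearIndependent ℝ (fun a => (LprevSpan n).mkQ (ψ a))) :
    LprevSpan n ⊔ Submodule.span ℝ (Set.range ψ) = LnSpan n := by
  classical
  have hψ : LinearIndependent ℝ ψ := by
    have h : (fun a => (LprevSpan n).mkQ (ψ a)) = (LprevSpan n).mkQ ∘ ψ := rfl
    exact LinearIndependent.of_comp _ (h ▸ hli)
  set b0 := Module.finBasis ℝ (LprevSpan n) with hb0
  set v : Fin (Module.finrank ℝ (LprevSpan n)) ⊕ Fin (n+1) → LaurentPoly2 :=
    Sum.elim (fun i => (b0 i : LaurentPoly2)) ψ with hv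
  have hspan0 : Submodule.span ℝ (Set.range fun i => (b0 i : LaurentPoly2)) = LprevSpan n := by
    have h : (fun i => (b0 i : LaurentPoly2)) = (LprevSpan n).subtype ∘ b0 := rfl
    rw [h, Set.range_comp, Submodule.span_image, b0.span_eq, Submodule.map_subtype_top]
  have hli0 : LinearIndependent ℝ (fun i => (b0 i : LaurentPoly2)) :=
    b0.linearIndependent.map' (LprevSpan n).subtype (Submodule.ker_subtype _)
  have hdisj : Disjoint (LprevSpan n) (Submodule.span ℝ (Set.range ψ)) := by
    rw [Submodule.disjoint_def]
    intro x hx1 hx2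
    obtain ⟨c, hc⟩ := (Submodule.mem_span_range_iff_exists_fun ℝ).mp hx2
    have h0 : ∑ b, c b • (LprevSpan n).mkQ (ψ b) = 0 := by
      have h1 := congrArg (LprevSpan n).mkQ hc
      rw [map_sum] at h1
      simp only [map_smul] at h1
      rw [h1]
      exact (Submodule.Quotient.mk_eq_zero _).mpr hx1
    have hc0 := Fintype.linearIndependent_iff.mp hli c h0
    rw [← hc]
    simp [hc0]
  have hsum : LinearIndependent ℝ v := hli0.sum_type hψ (by rw [hspan0]; exact hdisj)
  have hrange : Submodule.span ℝ (Set.range v) =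
      LprevSpan n ⊔ Submodule.span ℝ (Set.range ψ) := by
    rw [hv, Set.Sum.elim_range, Submodule.span_union, hspan0]
  have hle : LprevSpan n ⊔ Submodule.span ℝ (Set.range ψ) ≤ LnSpan n :=
    sup_le (Lprev_le n) (Submodule.span_le.mpr (by rintro x ⟨b, rfl⟩; exact hmem b))
  have hfr : Module.finrank ℝ (Submodule.span ℝ (Set.range v)) =
      Module.finrank ℝ (LnSpan n) := by
    rw [finrank_span_eq_card hsum, finrank_Ln_prev]
    simp
  have hge : Module.finrank ℝ (LnSpan n) ≤
      Module.finrank ℝ ↥(LprevSpan n ⊔ Submodule.span ℝ (Set.range ψ)) := by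
    rw [← hrange, hfr]
  exact Submodule.eq_of_le_of_finrank_le hle hge

section Phi

variable (φ : (n : ℕ) → Fin (n + 1) → LaurentPoly2)

lemma ortho_below (hsys : IsLaurentSystem φ)
    (hortho : ∀ n k : ℕ, k < n → ∀ (a : Fin (n + 1)) (b : Fin (k + 1)),
      L (φ n a * φ k b) = 0)
    (n : ℕ) (a : Fin (n+1)) :
    ∀ m, m < n → LnSpan m ≤ LinearMap.ker (BF L (φ n a)) := by
  intro m
  induction m with
  | zero =>
      intro h0
      rw [← span_lemma 0 (φ 0) (hsys 0).1 (hsys 0).2]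
      refine sup_le bot_le (Submodule.span_le.mpr ?_)
      rintro x ⟨b, rfl⟩
      exact LinearMap.mem_ker.mpr (hortho n 0 h0 a b)
  | succ m ih =>
      intro h
      rw [← span_lemma (m+1) (φ (m+1)) (hsys (m+1)).1 (hsys (m+1)).2]
      refine sup_le (ih (by omega)) (Submodule.span_le.mpr ?_)
      rintro x ⟨b, rfl⟩
      exact LinearMap.mem_ker.mpr (hortho n (m+1) h a b)

lemma nd_step (hsys : IsLaurentSystem φ)
    (hgram : ∀ n : ℕ, (Matrix.of fun a b : Fin (n + 1) => L (φ n a * φ n b)).det ≠ 0)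
    (n : ℕ)
    (hprevker : ∀ a : Fin (n+1), LprevSpan n ≤ LinearMap.ker (BF L (φ n a)))
    (hprevnd : ∀ p ∈ LprevSpan n, (∀ q ∈ LprevSpan n, L (p * q) = 0) → p = 0) :
    Nd L n := by
  intro p hp hpq
  rw [← span_lemma n (φ n) (hsys n).1 (hsys n).2] at hp
  obtain ⟨r, hr, s, hs, rfl⟩ := Submodule.mem_sup.mp hp
  obtain ⟨c, hc⟩ := (Submodule.mem_span_range_iff_exists_fun ℝ).mp hs
  have key : ∀ a, ∑ b, L (φ n a * φ n b) * c b = 0 := by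
    intro a
    have e1 : L (φ n a * (r + s)) = 0 := by
      rw [mul_comm]; exact hpq (φ n a) ((hsys n).1 a)
    have e2 : L (φ n a * r) = 0 := LinearMap.mem_ker.mp (hprevker a hr)
    have e3 : L (φ n a * s) = ∑ b, c b * L (φ n a * φ n b) := by
      rw [← hc, Finset.mul_sum, map_sum]
      exact Finset.sum_congr rfl (fun b _ => by rw [mul_smul_comm, map_smul, smul_eq_mul])
    rw [mul_add, map_add, e2, zero_add, e3] at e1
    calc ∑ b, L (φ n a * φ n b) * c b = ∑ b, c b * L (φ n a * φ n b) := by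
          exact Finset.sum_congr rfl (fun b _ => mul_comm _ _)
      _ = 0 := e1
  have c0 : c = 0 := Matrix.eq_zero_of_mulVec_eq_zero (hgram n)
    (funext fun a => by simpa [Matrix.mulVec, dotProduct] using key a)
  have hs0 : s = 0 := by rw [← hc, c0]; simp
  rw [hs0, add_zero]
  refine hprevnd r hr (fun q hq => ?_)
  have h2 := hpq q (Lprev_le n hq)
  rw [hs0, add_zero] at h2
  exact h2

lemma nd_all (hsys : IsLaurentSystem φ)
    (hortho : ∀ n k : ℕ, k < n → ∀ (a : Fin (n + 1)) (b : Fin (k + 1)),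
      L (φ n a * φ k b) = 0)
    (hgram : ∀ n : ℕ, (Matrix.of fun a b : Fin (n + 1) => L (φ n a * φ n b)).det ≠ 0) :
    ∀ n, Nd L n := by
  intro n
  induction n with
  | zero =>
      refine nd_step L φ hsys hgram 0 (fun a => bot_le) ?_
      intro p hp _
      exact (Submodule.mem_bot ℝ).mp hp
  | succ n ih =>
      refine nd_step L φ hsys hgram (n+1) ?_ ?_
      · intro a
        exact ortho_below L φ hsys hortho (n+1) a n (Nat.lt_succ_self n)
      · exact ih

end Phi

end OLaux

/-- A system of orthogonal Laurent polynomials with respect to `L` exists iff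
all moment determinants `Δ_n = det M_n` are nonzero. -/
theorem exists_orthogonal_iff_det_ne_zero (L : LaurentPoly2 →ₗ[ℝ] ℝ) :
    (∃ φ : (n : ℕ) → Fin (n + 1) → LaurentPoly2, IsLaurentSystem φ ∧
      (∀ n k : ℕ, k < n → ∀ (a : Fin (n + 1)) (b : Fin (k + 1)),
        L (φ n a * φ k b) = 0) ∧
      (∀ n : ℕ, (Matrix.of fun a b : Fin (n + 1) => L (φ n a * φ n b)).det ≠ 0)) ↔
    ∀ n : ℕ, (momMat L n).det ≠ 0 := by
  constructor
  · rintro ⟨φ, hsys, hortho, hgram⟩ n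
    rw [OLaux.momMat_det_iff]
    exact OLaux.nd_all L φ hsys hortho hgram n
  · intro hd
    have hnd : ∀ n, OLaux.Nd L n := fun n => (OLaux.momMat_det_iff L n).mp (hd n)
    have hprev : ∀ n, (OLaux.BrV L (LprevSpan n)).Nondegenerate := by
      intro n
      cases n with
      | zero => exact OLaux.Lprev_nd_zero L
      | succ n => exact (OLaux.nd_iff L n).mpr (hnd n)
    let bW : (n : ℕ) → Module.Basis (Fin (n+1)) ℝ (OLaux.Wn L n) := fun n =>
      Module.finBasisOfFinrankEq ℝ _ (OLaux.finrank_Wn L n (hprev n))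
    refine ⟨fun n a => (bW n a : LaurentPoly2), ?_, ?_, ?_⟩
    · intro n
      refine ⟨fun a => OLaux.Wn_le L n (bW n a).2, ?_⟩
      have hker : LinearMap.ker ((LprevSpan n).mkQ ∘ₗ (OLaux.Wn L n).subtype) = ⊥ := by
        rw [LinearMap.ker_comp, Submodule.ker_mkQ, eq_bot_iff]
        rintro x hx
        have hmem : (x : LaurentPoly2) ∈ LprevSpan n ⊓ OLaux.Wn L n := ⟨hx, x.2⟩
        rw [OLaux.disj_Wn L n (hprev n)] at hmem
        exact (Submodule.mem_bot ℝ).mpr (Subtype.ext ((Submodule.mem_bot ℝ).mp hmem))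
      have h : (fun a : Fin (n+1) => (LprevSpan n).mkQ ((bW n a : LaurentPoly2))) =
          ((LprevSpan n).mkQ ∘ₗ (OLaux.Wn L n).subtype) ∘ (bW n) := rfl
      rw [h]
      exact (bW n).linearIndependent.map' _ hker
    · intro n k hkn a b
      have h1 : ((bW k b : LaurentPoly2)) ∈ LprevSpan n := by
        have h2 : (bW k b : LaurentPoly2) ∈ LnSpan k := OLaux.Wn_le L k (bW k b).2
        cases n with
        | zero => exact absurd hkn (by omega)
        | succ n => exact OLaux.LnSpan_mono (by omega) h2
      exact ((OLaux.mem_Wn L n _).mp (bW n a).2).2 _ h1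
    · intro n
      have hWnd : (OLaux.BrV L (OLaux.Wn L n)).Nondegenerate := by
        refine .ofSeparatingLeft fun x hx => ?_
        have hxW := (OLaux.mem_Wn L n _).mp x.2
        have hker : LnSpan n ≤ LinearMap.ker (OLaux.BF L (x : LaurentPoly2)) := by
          rw [← OLaux.sup_Wn L n (hprev n)]
          refine sup_le ?_ ?_
          · intro q hq
            exact LinearMap.mem_ker.mpr (hxW.2 q hq)
          · intro q hq
            exact LinearMap.mem_ker.mpr (hx ⟨q, hq⟩)
        exact Subtype.ext (hnd n (x : LaurentPoly2) hxW.1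
          (fun q hq => LinearMap.mem_ker.mp (hker hq)))
      have hmat : (Matrix.of fun a b : Fin (n+1) =>
          L ((bW n a : LaurentPoly2) * (bW n b : LaurentPoly2))) =
          LinearMap.BilinForm.toMatrix (bW n) (OLaux.BrV L (OLaux.Wn L n)) := by
        ext a b
        rw [LinearMap.BilinForm.toMatrix_apply]
        rfl
      rw [hmat]
      exact (LinearMap.BilinForm.nondegenerate_iff_det_ne_zero (bW n)).mp hWnd
end

section
/- Degree-doubling for products of balanced Laurent spaces (Lemma Harrisprev, index version): let c_n = (-1)^{n+1}⌊(n+1)/2⌋ and ind : ℤ → ℕ its inverse. For every p ≥ 2 and every pair of integers (a, b) with ind(a) + ind(b) ≤ 2p − 1, there exist integers a₁, a₂, b₁, b₂ with a = a₁ + a₂, b = b₁ + b₂, ind(a₁) + ind(b₁) ≤ p − 1, and ind(a₂) + ind(b₂) ≤ p. -/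
/-- The inverse of `cseq`: `ind m = 2m - 1` if `m > 0`, `ind m = -2m` if `m ≤ 0`. -/
def ind (m : ℤ) : ℕ := if 0 < m then (2 * m - 1).toNat else (-(2 * m)).toNat

lemma ind_eq (m : ℤ) : ind m = max (2 * m - 1).toNat (-(2 * m)).toNat := by
  unfold ind; split <;> omega

lemma key (p : ℕ) (a b : ℤ) (hp : 2 ≤ p) (h : ind a + ind b ≤ 2 * p - 1)
    (hbig : p + 1 ≤ ind a) :
    ∃ a₁ a₂ b₁ b₂ : ℤ, a = a₁ + a₂ ∧ b = b₁ + b₂ ∧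
      ind a₁ + ind b₁ ≤ p - 1 ∧ ind a₂ + ind b₂ ≤ p := by
  rcases lt_trichotomy a 0 with ha | ha | ha
  · by_cases hp2 : p % 2 = 0
    · refine ⟨-(((p - 1 - ind b) / 2 : ℕ) : ℤ), a + (((p - 1 - ind b) / 2 : ℕ) : ℤ), b, 0,
        ?_, ?_, ?_, ?_⟩ <;> simp only [ind_eq] at h hbig ⊢ <;> omega
    · refine ⟨-(((p - 1) / 2 : ℕ) : ℤ), a + (((p - 1) / 2 : ℕ) : ℤ), 0, b,
        ?_, ?_, ?_, ?_⟩ <;> simp only [ind_eq] at h hbig ⊢ <;> omega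
  · simp only [ind_eq] at hbig; omega
  · refine ⟨(((p - ind b) / 2 : ℕ) : ℤ), a - (((p - ind b) / 2 : ℕ) : ℤ), b, 0,
      ?_, ?_, ?_, ?_⟩ <;> simp only [ind_eq] at h hbig ⊢ <;> omega

theorem ind_factorization (p : ℕ) (hp : 2 ≤ p) (a b : ℤ)
    (h : ind a + ind b ≤ 2 * p - 1) :
    ∃ a₁ a₂ b₁ b₂ : ℤ, a = a₁ + a₂ ∧ b = b₁ + b₂ ∧
      ind a₁ + ind b₁ ≤ p - 1 ∧ ind a₂ + ind b₂ ≤ p := by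
  by_cases h1 : ind a ≤ p - 1 ∧ ind b ≤ p
  · exact ⟨a, 0, 0, b, by ring, by ring, by simp only [ind_eq] at h1 ⊢; omega, by simp only [ind_eq] at h1 ⊢; omega⟩
  by_cases h2 : ind b ≤ p - 1 ∧ ind a ≤ p
  · exact ⟨0, a, b, 0, by ring, by ring, by simp only [ind_eq] at h2 ⊢; omega, by simp only [ind_eq] at h2 ⊢; omega⟩
  have hor : p + 1 ≤ ind a ∨ p + 1 ≤ ind b := by omega
  rcases hor with hbig | hbig
  · exact key p a b hp h hbig
  · obtain ⟨b₁, b₂, a₁, a₂, hb, ha, h1', h2'⟩ := key p b a hp (by omega) hbig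
    exact ⟨a₁, a₂, b₁, b₂, ha, hb, by omega, by omega⟩
end
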